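/- Concave-convexlike property of the regularized preference model: for any two policies π_1, π_2 and coefficient c ∈ [0,1], there exists a policy π_c such that for every policy π': c·P_α(π_1, π') + (1−c)·P_α(π_2, π') ≤ P_α(π_c, π'), where P_α(π,π') = P(π ≻ π') − α KL_p(π||μ) + α KL_p(π'||μ). -/

import Mathlib

open Finset

variable {X Y : Type} [Fintype X] [Fintype Y] [DecidableEq X]

/-- Per-state KL divergence between action distributions. -/
noncomputable def klDist {Y : Type} [Fintype Y] (p q : Y → ℝ) : ℝ :=
  ∑ y, p y * Real.log (p y / q y)

/-- Reach probabilities. -/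
noncomputable def reach (p : ℕ → X → Y → X → ℝ) (π : ℕ → X → Y → ℝ) (x1 : X) :
    ℕ → X → ℝ
  | 0, x => if x = x1 then 1 else 0
  | h + 1, x' => ∑ x : X, ∑ y : Y, reach p π x1 h x * (π h x y * p h x y x')

/-- Preference between policies: expectation of the final-state preference. -/
noncomputable def prefPol (Pref : X → X → ℝ) (p : ℕ → X → Y → X → ℝ)
    (π π' : ℕ → X → Y → ℝ) (x1 : X) (H : ℕ) : ℝ :=
  ∑ x : X, ∑ x' : X, reach p π x1 H x * reach p π' x1 H x' * Pref x x'

/-- Trajectory KL divergence, written via reach probabilities as the reach-weighted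
sum of the per-state KL divergences. -/
noncomputable def KLreach (p : ℕ → X → Y → X → ℝ) (π μ : ℕ → X → Y → ℝ)
    (x1 : X) (H : ℕ) : ℝ :=
  ∑ h : Fin H, ∑ x : X, reach p π x1 h x * klDist (π h x) (μ h x)

/-- A valid (Markov, time-dependent) policy. -/
def IsPolicy (π : ℕ → X → Y → ℝ) : Prop :=
  (∀ h x y, 0 ≤ π h x y) ∧ ∀ h x, ∑ y, π h x y = 1

/-!
The mixed policy is built state by state: at `x_h` it plays `π₁` and `π₂` in proportion to
`c ρ^{π₁}(x_h)` and `(1 - c) ρ^{π₂}(x_h)`. By induction on `h` its reach probabilities are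
exactly `c ρ^{π₁} + (1 - c) ρ^{π₂}`, so the preference term is affine along the mixture. The
KL term is a sum of perspectives `ρ(x_h) · KL(π(·|x_h) ‖ μ(·|x_h))`, which are jointly convex
because `t ↦ t log (t / q)` is convex; hence the KL term is convex along the mixture.
-/

lemma convexOn_mul_log_div (q : ℝ) : ConvexOn ℝ (Set.Ici 0) fun t => t * Real.log (t / q) := by
  rcases eq_or_ne q 0 with rfl | hq
  · -- `t / 0 = 0` and `log 0 = 0`, so the function vanishes
    simpa using convexOn_const (0 : ℝ) (convex_Ici (0 : ℝ))
  have hlin := (LinearMap.mulLeft ℝ (Real.log q)).concaveOn (convex_Ici 0)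
  refine (Real.convexOn_mul_log.sub hlin).congr fun t ht => ?_
  rcases (Set.mem_Ici.1 ht).eq_or_lt with rfl | ht
  · simp
  · simp only [Pi.sub_apply, LinearMap.mulLeft_apply, Real.log_div ht.ne' hq]
    ring

lemma convexOn_klDist {ι : Type} [Fintype ι] (q : ι → ℝ) :
    ConvexOn ℝ {p : ι → ℝ | ∀ i, 0 ≤ p i} fun p => klDist p q := by
  refine ⟨fun p hp p' hp' a b ha hb _ y => ?_, fun p hp p' hp' a b ha hb hab => ?_⟩
  · exact add_nonneg (mul_nonneg ha (hp y)) (mul_nonneg hb (hp' y))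
  · simp only [klDist, smul_eq_mul, Finset.mul_sum, ← Finset.sum_add_distrib]
    exact Finset.sum_le_sum fun y _ =>
      (convexOn_mul_log_div (q y)).2 (hp y) (hp' y) ha hb hab

/-- When `a + b = 0` the value is irrelevant; `π₁` keeps it a distribution. -/
noncomputable def mixDist {ι : Type*} (a b : ℝ) (π₁ π₂ : ι → ℝ) : ι → ℝ :=
  if a + b = 0 then π₁ else fun i => (a * π₁ i + b * π₂ i) / (a + b)

section mixDist

variable {ι : Type} {a b : ℝ} {π₁ π₂ : ι → ℝ}

lemma mixDist_of_pos (hab : 0 < a + b) :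
    mixDist a b π₁ π₂ = (a / (a + b)) • π₁ + (b / (a + b)) • π₂ := by
  funext y
  simp [mixDist, hab.ne', add_div, mul_div_right_comm]

lemma add_mul_mixDist (ha : 0 ≤ a) (hb : 0 ≤ b) (i : ι) :
    (a + b) * mixDist a b π₁ π₂ i = a * π₁ i + b * π₂ i := by
  rcases (add_nonneg ha hb).eq_or_lt with hab | hab
  · obtain ⟨rfl, rfl⟩ := (add_eq_zero_iff_of_nonneg ha hb).1 hab.symm
    simp
  · simp only [mixDist, hab.ne', if_false]
    field_simp

lemma mixDist_nonneg (ha : 0 ≤ a) (hb : 0 ≤ b) (h₁ : ∀ i, 0 ≤ π₁ i) (h₂ : ∀ i, 0 ≤ π₂ i)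
    (i : ι) : 0 ≤ mixDist a b π₁ π₂ i := by
  by_cases hab : a + b = 0
  · simpa only [mixDist, hab, if_true] using h₁ i
  · simp only [mixDist, hab, if_false]
    exact div_nonneg (add_nonneg (mul_nonneg ha (h₁ i)) (mul_nonneg hb (h₂ i)))
      (add_nonneg ha hb)

lemma sum_mixDist [Fintype ι] (hs₁ : ∑ i, π₁ i = 1) (hs₂ : ∑ i, π₂ i = 1) :
    ∑ i, mixDist a b π₁ π₂ i = 1 := by
  by_cases hab : a + b = 0
  · simpa only [mixDist, hab, if_true] using hs₁
  · simp only [mixDist, hab, if_false, ← sum_div, sum_add_distrib, ← mul_sum, hs₁, hs₂,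
      mul_one, div_self hab]

/-- Joint convexity of the perspective `(w, π) ↦ w · KL(π ‖ q)` of the KL divergence. -/
lemma add_mul_klDist_mixDist_le [Fintype ι] (ha : 0 ≤ a) (hb : 0 ≤ b) (h₁ : ∀ i, 0 ≤ π₁ i)
    (h₂ : ∀ i, 0 ≤ π₂ i) (q : ι → ℝ) :
    (a + b) * klDist (mixDist a b π₁ π₂) q ≤ a * klDist π₁ q + b * klDist π₂ q := by
  rcases (add_nonneg ha hb).eq_or_lt with hab | hab
  · obtain ⟨rfl, rfl⟩ := (add_eq_zero_iff_of_nonneg ha hb).1 hab.symm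
    simp
  · have hconv := (convexOn_klDist q).2 h₁ h₂ (div_nonneg ha hab.le) (div_nonneg hb hab.le)
      (by field_simp)
    rw [← mixDist_of_pos hab, smul_eq_mul, smul_eq_mul] at hconv
    calc (a + b) * klDist (mixDist a b π₁ π₂) q
        ≤ (a + b) * (a / (a + b) * klDist π₁ q + b / (a + b) * klDist π₂ q) :=
          mul_le_mul_of_nonneg_left hconv hab.le
      _ = a * klDist π₁ q + b * klDist π₂ q := by field_simp

end mixDist

lemma reach_nonneg {p : ℕ → X → Y → X → ℝ} {π : ℕ → X → Y → ℝ} {x1 : X}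
    (hp : ∀ h x y x', 0 ≤ p h x y x') (hπ : ∀ h x y, 0 ≤ π h x y) (h : ℕ) (x : X) :
    0 ≤ reach p π x1 h x := by
  induction h generalizing x with
  | zero => simp only [reach]; split_ifs <;> norm_num
  | succ n ih =>
    exact sum_nonneg fun x _ => sum_nonneg fun y _ =>
      mul_nonneg (ih x) (mul_nonneg (hπ n x y) (hp n x y _))

noncomputable def mixPolicy (p : ℕ → X → Y → X → ℝ) (π₁ π₂ : ℕ → X → Y → ℝ) (x1 : X) (c : ℝ) :
    ℕ → X → Y → ℝ :=
  fun h x => mixDist (c * reach p π₁ x1 h x) ((1 - c) * reach p π₂ x1 h x) (π₁ h x) (π₂ h x)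

section mixPolicy

variable {p : ℕ → X → Y → X → ℝ} {π₁ π₂ : ℕ → X → Y → ℝ} {x1 : X} {c : ℝ}

lemma reach_mixPolicy (hp : ∀ h x y x', 0 ≤ p h x y x') (hπ₁ : ∀ h x y, 0 ≤ π₁ h x y)
    (hπ₂ : ∀ h x y, 0 ≤ π₂ h x y) (hc : 0 ≤ c) (hc' : c ≤ 1) (h : ℕ) (x : X) :
    reach p (mixPolicy p π₁ π₂ x1 c) x1 h x =
      c * reach p π₁ x1 h x + (1 - c) * reach p π₂ x1 h x := by
  induction h generalizing x with
  | zero => simp only [reach]; split_ifs <;> ring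
  | succ n ih =>
    have hstep : ∀ z y, (c * reach p π₁ x1 n z + (1 - c) * reach p π₂ x1 n z) *
        (mixPolicy p π₁ π₂ x1 c n z y * p n z y x) =
        c * (reach p π₁ x1 n z * (π₁ n z y * p n z y x)) +
          (1 - c) * (reach p π₂ x1 n z * (π₂ n z y * p n z y x)) := fun z y => by
      rw [← mul_assoc, mixPolicy, add_mul_mixDist (mul_nonneg hc (reach_nonneg hp hπ₁ n z))
        (mul_nonneg (sub_nonneg.2 hc') (reach_nonneg hp hπ₂ n z))]
      ring
    simp only [reach, ih, hstep, sum_add_distrib, mul_sum]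

lemma isPolicy_mixPolicy (hp : ∀ h x y x', 0 ≤ p h x y x') (hπ₁ : IsPolicy π₁)
    (hπ₂ : IsPolicy π₂) (hc : 0 ≤ c) (hc' : c ≤ 1) : IsPolicy (mixPolicy p π₁ π₂ x1 c) := by
  refine ⟨fun h x => mixDist_nonneg ?_ ?_ (hπ₁.1 h x) (hπ₂.1 h x), fun h x =>
    sum_mixDist (hπ₁.2 h x) (hπ₂.2 h x)⟩
  · exact mul_nonneg hc (reach_nonneg hp hπ₁.1 h x)
  · exact mul_nonneg (sub_nonneg.2 hc') (reach_nonneg hp hπ₂.1 h x)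

lemma prefPol_mixPolicy (Pref : X → X → ℝ) (π' : ℕ → X → Y → ℝ) (H : ℕ)
    (hp : ∀ h x y x', 0 ≤ p h x y x') (hπ₁ : ∀ h x y, 0 ≤ π₁ h x y)
    (hπ₂ : ∀ h x y, 0 ≤ π₂ h x y) (hc : 0 ≤ c) (hc' : c ≤ 1) :
    prefPol Pref p (mixPolicy p π₁ π₂ x1 c) π' x1 H =
      c * prefPol Pref p π₁ π' x1 H + (1 - c) * prefPol Pref p π₂ π' x1 H := by
  simp only [prefPol, reach_mixPolicy hp hπ₁ hπ₂ hc hc', mul_sum, ← sum_add_distrib]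
  exact sum_congr rfl fun _ _ => sum_congr rfl fun _ _ => by ring

lemma KLreach_mixPolicy_le (μ : ℕ → X → Y → ℝ) (H : ℕ)
    (hp : ∀ h x y x', 0 ≤ p h x y x') (hπ₁ : ∀ h x y, 0 ≤ π₁ h x y)
    (hπ₂ : ∀ h x y, 0 ≤ π₂ h x y) (hc : 0 ≤ c) (hc' : c ≤ 1) :
    KLreach p (mixPolicy p π₁ π₂ x1 c) μ x1 H ≤
      c * KLreach p π₁ μ x1 H + (1 - c) * KLreach p π₂ μ x1 H := by
  simp only [KLreach, reach_mixPolicy hp hπ₁ hπ₂ hc hc', mul_sum, ← sum_add_distrib]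
  gcongr with h _ x _
  calc _ ≤ c * reach p π₁ x1 h x * klDist (π₁ h x) (μ h x) +
        (1 - c) * reach p π₂ x1 h x * klDist (π₂ h x) (μ h x) :=
        add_mul_klDist_mixDist_le (mul_nonneg hc (reach_nonneg hp hπ₁ h x))
          (mul_nonneg (sub_nonneg.2 hc') (reach_nonneg hp hπ₂ h x)) (hπ₁ h x) (hπ₂ h x) _
    _ = _ := by ring

end mixPolicy

/-- **Concave-convexlike property of the regularized preference model (Lemma A.3).**
For any two policies `π₁, π₂` and `c ∈ [0,1]` there exists a policy `π_c` such that
for every policy `π'`: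
`c·P_α(π₁,π') + (1−c)·P_α(π₂,π') ≤ P_α(π_c,π')`, where
`P_α(π,π') = P(π≻π') − α·KL_p(π‖μ) + α·KL_p(π'‖μ)`. -/
theorem regularized_preference_concave_convexlike
    (Pref : X → X → ℝ) (p : ℕ → X → Y → X → ℝ) (μ π₁ π₂ : ℕ → X → Y → ℝ)
    (x1 : X) (H : ℕ) (α : ℝ) (hα : 0 < α)
    (c : ℝ) (hc : 0 ≤ c) (hc' : c ≤ 1)
    (hp : (∀ h x y x', 0 ≤ p h x y x') ∧ ∀ h x y, ∑ x', p h x y x' = 1)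
    (hπ₁ : IsPolicy π₁) (hπ₂ : IsPolicy π₂) :
    ∃ πc : ℕ → X → Y → ℝ, IsPolicy πc ∧
      ∀ π' : ℕ → X → Y → ℝ, IsPolicy π' →
        c * (prefPol Pref p π₁ π' x1 H - α * KLreach p π₁ μ x1 H +
              α * KLreach p π' μ x1 H) +
          (1 - c) * (prefPol Pref p π₂ π' x1 H - α * KLreach p π₂ μ x1 H +
              α * KLreach p π' μ x1 H) ≤
        prefPol Pref p πc π' x1 H - α * KLreach p πc μ x1 H +
          α * KLreach p π' μ x1 H := by
  refine ⟨mixPolicy p π₁ π₂ x1 c, isPolicy_mixPolicy hp.1 hπ₁ hπ₂ hc hc', fun π' _ => ?_⟩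
  rw [prefPol_mixPolicy Pref π' H hp.1 hπ₁.1 hπ₂.1 hc hc']
  have hKL := KLreach_mixPolicy_le μ H hp.1 hπ₁.1 hπ₂.1 hc hc' (x1 := x1)
  linarith [mul_le_mul_of_nonneg_left hKL hα.le]
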